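/- arXiv:1911.07113 — 2 statements merged into one kernel-verified Lean document; each statement's English description precedes it below -/
import Mathlib

section
/- For any digital images X and Y and any i ≥ 2, CSᵢ(X,Y) ⊆ CS_{i+1}(X,Y). If moreover Y contains at least one pair of adjacent points, then CSᵢ(X,Y) = CS_{i+1}(X,Y) (and both equal {0,1,…,#X}). -/
/-- A map between digital images is digitally continuous if adjacent points map to
equal or adjacent points. -/
def DigCont {X Y : Type*} (κX : X → X → Prop) (κY : Y → Y → Prop) (f : X → Y) : Prop :=
  ∀ x y, κX x y → f x = f y ∨ κY (f x) (f y)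

/-- The coincidence point spectrum `CSᵢ(X,Y)`. -/
def CS {X Y : Type*} (κX : X → X → Prop) (κY : Y → Y → Prop) (i : ℕ) : Set ℕ :=
  {n | ∃ f : Fin i → X → Y, (∀ j, DigCont κX κY (f j)) ∧
        n = ({x | ∀ j k, f j x = f k x} : Set X).ncard}


/-!
Duplicating one of the maps does not change the coincidence set, so the spectra increase with `i`.
Conversely, if `a` and `b` are adjacent in `Y`, then for any `S ⊆ X` the pair (constant `a`,
`a` on `S` and `b` off `S`) is continuous with coincidence set exactly `S`; together with the trivial
bound `#C ≤ #X` this pins every spectrum `CSᵢ`, `i ≥ 2`, down to `{0, …, #X}`.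
-/

open Function

section

variable {X Y : Type*} {κX : X → X → Prop} {κY : Y → Y → Prop}

theorem digCont_const (a : Y) : DigCont κX κY (fun _ : X => a) :=
  fun _ _ _ => Or.inl rfl

theorem digCont_piecewise_const (hsY : Symmetric κY) {a b : Y} (hab : κY a b) (S : Set X)
    [DecidablePred (· ∈ S)] : DigCont κX κY (S.piecewise (fun _ => a) (fun _ => b)) := by
  intro x y _
  by_cases hx : x ∈ S <;> by_cases hy : y ∈ S <;> simp [hx, hy, hab, hsY hab]

theorem CS_mono {m n : ℕ} (hn : 1 ≤ n) (hnm : n ≤ m) : CS κX κY n ⊆ CS κX κY m := by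
  rintro _ ⟨f, hf, rfl⟩
  let σ : Fin m → Fin n := fun k => ⟨min k (n - 1), by omega⟩
  have hσ : Surjective σ := fun k =>
    ⟨Fin.castLE hnm k, Fin.ext (by simp only [σ, Fin.val_castLE]; omega)⟩
  exact ⟨fun k => f (σ k), fun k => hf (σ k), by congr 1; ext x; exact hσ.forall₂⟩

theorem CS_subset_Iic [Fintype X] (i : ℕ) : CS κX κY i ⊆ {m | m ≤ Fintype.card X} := by
  rintro _ ⟨f, -, rfl⟩
  simpa using Set.ncard_le_card (α := X) _

theorem Iic_subset_CS_two [Fintype X] (hsY : Symmetric κY) (hiY : Irreflexive κY) {a b : Y}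
    (hab : κY a b) : {m | m ≤ Fintype.card X} ⊆ CS κX κY 2 := by
  classical
  intro n (hn : n ≤ Fintype.card X)
  obtain ⟨S, -, rfl⟩ := Set.exists_subset_card_eq (s := (Set.univ : Set X)) (n := n) (by simpa)
  have hba : b ≠ a := fun h => hiY a (h ▸ hab)
  refine ⟨![fun _ => a, S.piecewise (fun _ => a) (fun _ => b)], ?_, ?_⟩
  · simp only [Fin.forall_fin_two]
    exact ⟨digCont_const a, digCont_piecewise_const hsY hab S⟩
  · congr 1
    ext x
    by_cases hx : x ∈ S <;> simp [Fin.forall_fin_two, hx, hba, hba.symm]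

theorem CS_eq_Iic [Fintype X] (hsY : Symmetric κY) (hiY : Irreflexive κY) {a b : Y}
    (hab : κY a b) {i : ℕ} (hi : 2 ≤ i) : CS κX κY i = {m | m ≤ Fintype.card X} :=
  (CS_subset_Iic i).antisymm ((Iic_subset_CS_two hsY hiY hab).trans (CS_mono (by omega) hi))

end

theorem CS_succ_subset_and_eq_general {X Y : Type*} [Fintype X]
    (κX : X → X → Prop) (κY : Y → Y → Prop)
    (hsY : Symmetric κY) (hiY : Irreflexive κY)
    {i : ℕ} (hi : 2 ≤ i) :
    CS κX κY i ⊆ CS κX κY (i + 1) ∧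
    ((∃ a b : Y, κY a b) →
      CS κX κY i = CS κX κY (i + 1) ∧
      CS κX κY i = {m | m ≤ Fintype.card X}) := by
  refine ⟨CS_mono (by omega) (by omega), ?_⟩
  rintro ⟨a, b, hab⟩
  have hCS := CS_eq_Iic (κX := κX) hsY hiY hab hi
  exact ⟨hCS.trans (CS_eq_Iic hsY hiY hab (by omega)).symm, hCS⟩

/-- For any `i ≥ 2`, `CSᵢ(X,Y) ⊆ CS_{i+1}(X,Y)`; if `Y` has a pair of adjacent points
then `CSᵢ(X,Y) = CS_{i+1}(X,Y)` and both equal `{0,1,…,#X}`. -/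
theorem CS_succ_subset_and_eq {X Y : Type*} [Fintype X] [Fintype Y]
    (κX : X → X → Prop) (κY : Y → Y → Prop)
    (hsX : Symmetric κX) (hiX : Irreflexive κX)
    (hsY : Symmetric κY) (hiY : Irreflexive κY)
    {i : ℕ} (hi : 2 ≤ i) :
    CS κX κY i ⊆ CS κX κY (i + 1) ∧
    ((∃ a b : Y, κY a b) →
      CS κX κY i = CS κX κY (i + 1) ∧
      CS κX κY i = {m | m ≤ Fintype.card X}) :=
  CS_succ_subset_and_eq_general κX κY hsY hiY hi
end

section
/- Let X be a connected digital image and Y a totally disconnected digital image (every connected component of Y is a singleton) with #Y > 1. Then for every i ≥ 2, the coincidence point spectrum satisfies CSᵢ(X,Y) = {0, #X}. -/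
/-- If `X` is connected and `Y` is totally disconnected with `#Y > 1`, then for every
`i ≥ 2`, `CSᵢ(X,Y) = {0, #X}`. -/
theorem CS_of_totally_disconnected {X Y : Type*} [Fintype X] [Fintype Y]
    (κX : X → X → Prop) (κY : Y → Y → Prop)
    (hsX : Symmetric κX) (hiX : Irreflexive κX)
    (hsY : Symmetric κY) (hiY : Irreflexive κY)
    (hconn : ∀ x y : X, Relation.ReflTransGen κX x y)
    (htd : ∀ a b : Y, ¬ κY a b)
    (hY : 1 < Fintype.card Y) {i : ℕ} (hi : 2 ≤ i) :
    CS κX κY i = {0, Fintype.card X} := by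
  obtain ⟨a, b, hab⟩ := Fintype.exists_pair_of_one_lt_card hY
  ext n
  constructor
  · rintro ⟨f, hf, rfl⟩
    -- each f j is constant
    have hconst : ∀ j x y, f j x = f j y := by
      intro j x y
      induction hconn x y with
      | refl => rfl
      | tail _ h ih =>
        rcases hf j _ _ h with he | hk
        · exact ih.trans he
        · exact absurd hk (htd _ _)
    by_cases hX : Nonempty X
    · obtain ⟨x₀⟩ := hX
      by_cases hall : ∀ j k, f j x₀ = f k x₀
      · right
        have : ({x | ∀ j k, f j x = f k x} : Set X) = Set.univ := by
          ext x
          simp only [Set.mem_setOf_eq, Set.mem_univ, iff_true]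
          intro j k
          exact (hconst j x x₀).trans ((hall j k).trans (hconst k x₀ x))
        simp [this, Set.ncard_univ, Nat.card_eq_fintype_card]
      · left
        push_neg at hall
        obtain ⟨j, k, hjk⟩ := hall
        have : ({x | ∀ j k, f j x = f k x} : Set X) = ∅ := by
          ext x
          simp only [Set.mem_setOf_eq, Set.mem_empty_iff_false, iff_false]
          intro h
          exact hjk ((hconst j x₀ x).trans ((h j k).trans (hconst k x x₀)))
        simp [this]
    · left
      have : ({x | ∀ j k, f j x = f k x} : Set X) = ∅ := by
        ext x; exact absurd ⟨x⟩ hX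
      simp [this]
  · rintro (rfl | rfl)
    · -- n = 0 : use two different constants
      refine ⟨fun j _ => if j = ⟨0, by omega⟩ then a else b, ?_, ?_⟩
      · intro j x y _; left; rfl
      · have : ({x | ∀ j k : Fin i,
            (if j = ⟨0, by omega⟩ then a else b) = (if k = ⟨0, by omega⟩ then a else b)} : Set X) = ∅ := by
          ext x
          simp only [Set.mem_setOf_eq, Set.mem_empty_iff_false, iff_false]
          intro h
          have := h ⟨0, by omega⟩ ⟨1, by omega⟩
          simp [Fin.ext_iff] at this
          exact hab this
        rw [this]; simp
    · -- n = card X : all constant a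
      refine ⟨fun _ _ => a, fun j x y _ => Or.inl rfl, ?_⟩
      have : ({x | ∀ j k : Fin i, a = a} : Set X) = Set.univ := by
        ext x; simp
      rw [this, Set.ncard_univ, Nat.card_eq_fintype_card]
end
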